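/- arXiv:1603.01884 — 6 statements merged into one kernel-verified Lean document; each statement's English description precedes it below -/
import Mathlib

section
/- In a Banach algebra A, for any a, b ∈ A, e^{a+b} = lim_{n→∞} (e^{a/n} e^{b/n})^n (Trotter's product formula). -/
/-!
Both `t ↦ exp (t • a) * exp (t • b)` and `t ↦ exp (t • (a + b))` equal `1` at `0` with derivative
`a + b` there, so at `t = 1/n` each is `1 + O(1/n)` and they differ by `o(1/n)`. Telescoping
`pⁿ - qⁿ = ∑ pⁱ (p - q) qⁿ⁻¹⁻ⁱ` and bounding `‖pᵏ‖ ≤ ‖1‖ exp (k ‖p - 1‖)` gives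
`‖pⁿ - qⁿ‖ ≤ C · n ‖p - q‖ → 0`, while `exp (n⁻¹ • (a + b)) ^ n = exp (a + b)`.
-/

open NormedSpace Filter Asymptotics Topology

section NormedRing

variable {A : Type*} [NormedRing A]

theorem norm_pow_le_norm_one_mul_exp (p : A) (k : ℕ) :
    ‖p ^ k‖ ≤ ‖(1 : A)‖ * Real.exp (k * ‖p - 1‖) := by
  induction k with
  | zero => simp
  | succ k ih =>
    have hsplit : p ^ (k + 1) = p ^ k + p ^ k * (p - 1) := by noncomm_ring
    calc ‖p ^ (k + 1)‖ ≤ ‖p ^ k‖ * (1 + ‖p - 1‖) := by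
          rw [hsplit, mul_one_add]
          exact (norm_add_le _ _).trans (add_le_add_right (norm_mul_le _ _) _)
      _ ≤ ‖(1 : A)‖ * Real.exp (k * ‖p - 1‖) * Real.exp ‖p - 1‖ := by
          gcongr
          linarith [Real.add_one_le_exp ‖p - 1‖]
      _ = ‖(1 : A)‖ * Real.exp ((k + 1 : ℕ) * ‖p - 1‖) := by
          rw [mul_assoc, ← Real.exp_add]; push_cast; ring_nf

theorem pow_sub_pow_eq_sum (p q : A) (n : ℕ) :
    p ^ n - q ^ n = ∑ i ∈ Finset.range n, p ^ i * (p - q) * q ^ (n - 1 - i) := by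
  calc p ^ n - q ^ n
        = ∑ i ∈ Finset.range n, (p ^ (i + 1) * q ^ (n - (i + 1)) - p ^ i * q ^ (n - i)) := by
        simpa using (Finset.sum_range_sub (fun i => p ^ i * q ^ (n - i)) n).symm
    _ = _ := Finset.sum_congr rfl fun i hi => ?_
  have hi : i < n := Finset.mem_range.mp hi
  rw [show n - (i + 1) = n - 1 - i by omega, show n - i = n - 1 - i + 1 by omega, pow_succ p i,
    pow_succ' q]
  noncomm_ring

theorem norm_pow_sub_pow_le (p q : A) (n : ℕ) :
    ‖p ^ n - q ^ n‖ ≤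
      ‖(1 : A)‖ ^ 2 * Real.exp (n * (‖p - 1‖ + ‖q - 1‖)) * (n * ‖p - q‖) := by
  rw [pow_sub_pow_eq_sum]
  refine (norm_sum_le _ _).trans ?_
  calc ∑ i ∈ Finset.range n, ‖p ^ i * (p - q) * q ^ (n - 1 - i)‖
      ≤ ∑ _i ∈ Finset.range n,
          ‖(1 : A)‖ * Real.exp (n * ‖p - 1‖) * ‖p - q‖ * (‖(1 : A)‖ * Real.exp (n * ‖q - 1‖)) := by
        refine Finset.sum_le_sum fun i hi => ?_
        have hi : i ≤ n := (Finset.mem_range.mp hi).le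
        refine (norm_mul₃_le).trans ?_
        gcongr
        · exact (norm_pow_le_norm_one_mul_exp p i).trans (by gcongr)
        · exact (norm_pow_le_norm_one_mul_exp q _).trans (by gcongr; omega)
    _ = ‖(1 : A)‖ ^ 2 * Real.exp (n * (‖p - 1‖ + ‖q - 1‖)) * (n * ‖p - q‖) := by
        rw [Finset.sum_const, Finset.card_range, nsmul_eq_mul, mul_add, Real.exp_add]
        ring

theorem tendsto_pow_sub_pow_of_isLittleO {p q : ℕ → A}
    (hp : (fun n => p n - 1) =O[atTop] fun n => (n : ℝ)⁻¹)
    (hq : (fun n => q n - 1) =O[atTop] fun n => (n : ℝ)⁻¹)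
    (hpq : (fun n => p n - q n) =o[atTop] fun n => (n : ℝ)⁻¹) :
    Tendsto (fun n => p n ^ n - q n ^ n) atTop (𝓝 0) := by
  obtain ⟨cp, hcp⟩ := hp.bound
  obtain ⟨cq, hcq⟩ := hq.bound
  have hscaled : Tendsto (fun n : ℕ => n * ‖p n - q n‖) atTop (𝓝 0) := by
    refine hpq.norm_left.tendsto_div_nhds_zero.congr fun n => ?_
    rw [div_inv_eq_mul, mul_comm]
  refine squeeze_zero_norm' ?_
    (by simpa using hscaled.const_mul (‖(1 : A)‖ ^ 2 * Real.exp (cp + cq)))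
  filter_upwards [hcp, hcq, eventually_ne_atTop 0] with n hpn hqn hn
  have hn' : (0 : ℝ) < n := by positivity
  refine (norm_pow_sub_pow_le _ _ n).trans ?_
  gcongr
  rw [norm_inv, Real.norm_natCast] at hpn hqn
  calc (n : ℝ) * (‖p n - 1‖ + ‖q n - 1‖) ≤ n * (cp * (n : ℝ)⁻¹ + cq * (n : ℝ)⁻¹) := by gcongr
    _ = cp + cq := by field_simp

end NormedRing

section NormedAlgebra

variable {𝕂 A : Type*} [RCLike 𝕂] [NormedRing A] [NormedAlgebra 𝕂 A]

theorem RCLike.norm_inv_natCast (n : ℕ) : ‖(n : 𝕂)⁻¹‖ = (n : ℝ)⁻¹ := by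
  rw [norm_inv, RCLike.norm_natCast]

theorem HasDerivAt.isBigO_sub_one_inv_natCast {F : 𝕂 → A} {v : A} (hF : HasDerivAt F v 0)
    (hF0 : F 0 = 1) : (fun n : ℕ => F (n : 𝕂)⁻¹ - 1) =O[atTop] fun n => (n : ℝ)⁻¹ := by
  have h := hF.isBigO_sub.comp_tendsto tendsto_inv_atTop_nhds_zero_nat
  simp only [hF0, sub_zero] at h
  simpa only [Function.comp_def, RCLike.norm_inv_natCast] using h.norm_right

theorem HasDerivAt.isLittleO_sub_inv_natCast {F G : 𝕂 → A} {v : A} (hF : HasDerivAt F v 0)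
    (hG : HasDerivAt G v 0) (h0 : F 0 = G 0) :
    (fun n : ℕ => F (n : 𝕂)⁻¹ - G (n : 𝕂)⁻¹) =o[atTop] fun n => (n : ℝ)⁻¹ := by
  have h := (hasDerivAt_iff_isLittleO_nhds_zero.mp (hF.fun_sub hG)).comp_tendsto
    tendsto_inv_atTop_nhds_zero_nat
  simp only [sub_self, zero_add, h0, smul_zero, sub_zero] at h
  simpa only [Function.comp_def, RCLike.norm_inv_natCast] using h.norm_right

variable [CompleteSpace A]

theorem exp_inv_natCast_smul_pow (x : A) {n : ℕ} (hn : n ≠ 0) :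
    exp ((n : 𝕂)⁻¹ • x) ^ n = exp x := by
  let : NormedAlgebra ℚ A := .restrictScalars ℚ 𝕂 A
  rw [← exp_nsmul, ← Nat.cast_smul_eq_nsmul 𝕂, smul_smul,
    mul_inv_cancel₀ (Nat.cast_ne_zero.mpr hn), one_smul]

end NormedAlgebra

/-- Trotter's product formula in a complex Banach algebra:
`e^{a+b} = lim_n (e^{a/n} e^{b/n})^n`. -/
theorem stmt_2 {A : Type*} [NormedRing A] [NormedAlgebra ℂ A] [CompleteSpace A]
    (a b : A) :
    Tendsto (fun n : ℕ => (exp ((n : ℂ)⁻¹ • a) * exp ((n : ℂ)⁻¹ • b)) ^ n)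
      atTop (nhds (exp (a + b))) := by
  have hF : HasDerivAt (fun t : ℂ => exp (t • a) * exp (t • b)) (a + b) 0 := by
    simpa using (hasDerivAt_exp_smul_const a (0 : ℂ)).fun_mul (hasDerivAt_exp_smul_const b 0)
  have hG : HasDerivAt (fun t : ℂ => exp (t • (a + b))) (a + b) 0 := by
    simpa using hasDerivAt_exp_smul_const (a + b) (0 : ℂ)
  have hdiff := tendsto_pow_sub_pow_of_isLittleO (hF.isBigO_sub_one_inv_natCast (by simp))
    (hG.isBigO_sub_one_inv_natCast (by simp)) (hF.isLittleO_sub_inv_natCast hG (by simp))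
  rw [← tendsto_sub_nhds_zero_iff]
  refine hdiff.congr' ?_
  filter_upwards [eventually_ne_atTop 0] with n hn
  rw [exp_inv_natCast_smul_pow _ hn]
end

section
/- In a unital Banach algebra, for any a, b ∈ A, the element e^{a+b} belongs to the closed subgroup of the group of invertibles generated by the elements e^{a/n} and e^{b/n} for n = 1, 2, …. -/
/-!
By the inverse function theorem, `exp` has a local inverse `log` near `1` with derivative the
identity. Hence `e^{a/n} e^{b/n} = e^{z_n}` for large `n`, where `z_n = log (e^{a/n} e^{b/n})`
satisfies `n z_n → a + b`, the derivative of `t ↦ e^{ta} e^{tb}` at `0`. So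
`(e^{a/n} e^{b/n})^n = e^{n z_n} → e^{a+b}` (the Lie product formula), and these powers lie in the
subgroup generated by the `e^{a/n}` and `e^{b/n}`.
-/

open NormedSpace Filter Topology

theorem tendsto_exp_pow_of_tendsto_nsmul {A : Type*} [NormedRing A] [NormedAlgebra ℚ A]
    [CompleteSpace A] {z : ℕ → A} {c : A} (hz : Tendsto (fun n => n • z n) atTop (𝓝 c)) :
    Tendsto (fun n => exp (z n) ^ n) atTop (𝓝 (exp c)) := by
  simpa only [exp_nsmul] using hz.exp

theorem HasDerivAt.tendsto_nsmul_inv_natCast {𝕂 E : Type*} [RCLike 𝕂] [NormedAddCommGroup E]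
    [NormedSpace 𝕂 E] {h : 𝕂 → E} {c : E} (hh : HasDerivAt h c 0) (h0 : h 0 = 0) :
    Tendsto (fun n : ℕ => n • h (n : 𝕂)⁻¹) atTop (𝓝 c) := by
  have hinv : Tendsto (fun n : ℕ => (n : 𝕂)⁻¹) atTop (𝓝[≠] 0) :=
    tendsto_nhdsWithin_iff.mpr ⟨tendsto_inv_atTop_nhds_zero_nat,
      eventually_ge_atTop 1 |>.mono fun n hn => by simpa using Nat.one_le_iff_ne_zero.mp hn⟩
  simpa [Function.comp_def, h0, Nat.cast_smul_eq_nsmul] using hh.tendsto_slope_zero.comp hinv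

section

variable {𝕂 A : Type*} [RCLike 𝕂] [NormedRing A] [NormedAlgebra 𝕂 A] [CompleteSpace A]

theorem exists_local_log_of_hasDerivAt {γ : 𝕂 → A} {c : A} (hγ : HasDerivAt γ c 0)
    (hγ0 : γ 0 = 1) :
    ∃ h : 𝕂 → A, HasDerivAt h c 0 ∧ h 0 = 0 ∧ ∀ᶠ t in 𝓝 0, exp (h t) = γ t := by
  have hexp : HasStrictFDerivAt (exp : A → A)
      ((ContinuousLinearEquiv.refl 𝕂 A : A ≃L[𝕂] A) : A →L[𝕂] A) 0 :=
    hasStrictFDerivAt_exp_zero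
  set log := hexp.localInverse exp _ 0
  have hlog : HasFDerivAt log (ContinuousLinearMap.id 𝕂 A) (γ 0) := by
    simpa [hγ0] using hexp.to_localInverse.hasFDerivAt
  refine ⟨log ∘ γ, by simpa using hlog.comp_hasDerivAt 0 hγ, ?_, ?_⟩
  · simpa [hγ0] using hexp.localInverse_apply_image
  · have hright := hexp.eventually_right_inverse
    rw [exp_zero, ← hγ0] at hright
    exact hγ.continuousAt.eventually hright

theorem tendsto_pow_inv_natCast_of_hasDerivAt {γ : 𝕂 → A} {c : A} (hγ : HasDerivAt γ c 0)
    (hγ0 : γ 0 = 1) : Tendsto (fun n : ℕ => γ (n : 𝕂)⁻¹ ^ n) atTop (𝓝 (exp c)) := by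
  let := NormedAlgebra.restrictScalars ℚ 𝕂 A
  obtain ⟨log, hlog, hlog0, hexp_log⟩ := exists_local_log_of_hasDerivAt hγ hγ0
  have hγ_eq : ∀ᶠ n : ℕ in atTop, exp (log (n : 𝕂)⁻¹) ^ n = γ (n : 𝕂)⁻¹ ^ n :=
    (tendsto_inv_atTop_nhds_zero_nat.eventually hexp_log).mono fun n hn => by rw [hn]
  exact (tendsto_exp_pow_of_tendsto_nsmul (hlog.tendsto_nsmul_inv_natCast hlog0)).congr' hγ_eq

theorem hasDerivAt_exp_smul_mul_exp_smul (a b : A) :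
    HasDerivAt (fun t : 𝕂 => exp (t • a) * exp (t • b)) (a + b) 0 := by
  simpa [Pi.mul_def] using
    (hasDerivAt_exp_smul_const (𝕂 := 𝕂) a 0).mul (hasDerivAt_exp_smul_const b 0)

theorem tendsto_exp_smul_mul_exp_smul_pow (a b : A) :
    Tendsto (fun n : ℕ => (exp ((n : 𝕂)⁻¹ • a) * exp ((n : 𝕂)⁻¹ • b)) ^ n) atTop
      (𝓝 (exp (a + b))) :=
  tendsto_pow_inv_natCast_of_hasDerivAt (hasDerivAt_exp_smul_mul_exp_smul a b) (by simp)

end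

/-- In a complex unital Banach algebra, `e^{a+b}` belongs to the closure (in the norm
topology) of the subgroup of the group of invertibles generated by the elements
`e^{a/n}` and `e^{b/n}`, `n = 1, 2, …`. -/
theorem stmt_3 {A : Type*} [NormedRing A] [NormedAlgebra ℂ A] [CompleteSpace A]
    (a b : A) :
    exp (a + b) ∈
      closure ((fun u : Aˣ => (u : A)) ''
        (Subgroup.closure {u : Aˣ | ∃ n : ℕ, 0 < n ∧
          ((u : A) = exp ((n : ℂ)⁻¹ • a) ∨ (u : A) = exp ((n : ℂ)⁻¹ • b))} : Set Aˣ)) := by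
  let := NormedAlgebra.restrictScalars ℚ ℂ A
  set G := Subgroup.closure {u : Aˣ | ∃ n : ℕ, 0 < n ∧
    ((u : A) = exp ((n : ℂ)⁻¹ • a) ∨ (u : A) = exp ((n : ℂ)⁻¹ • b))}
  let expUnit (x : A) : Aˣ := (isUnit_exp x).unit
  have hmem : ∀ n : ℕ, 0 < n →
      expUnit ((n : ℂ)⁻¹ • a) * expUnit ((n : ℂ)⁻¹ • b) ∈ G := fun n hn =>
    G.mul_mem (Subgroup.subset_closure ⟨n, hn, Or.inl (isUnit_exp _).unit_spec⟩)
      (Subgroup.subset_closure ⟨n, hn, Or.inr (isUnit_exp _).unit_spec⟩)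
  refine mem_closure_of_tendsto (tendsto_exp_smul_mul_exp_smul_pow (𝕂 := ℂ) a b) ?_
  filter_upwards [eventually_gt_atTop 0] with n hn
  exact ⟨_, G.pow_mem (hmem n hn) n, by simp [expUnit]⟩
end

section
/- In a unital C*-algebra, if p is a projection and x ∈ pA(1−p) with ‖x‖ ≤ 1, then the element q(x) with block components q₁₁ = (1+√(1−xx*))/2, q₁₂ = x/2, q₂₁ = x*/2, q₂₂ = (1−√(1−xx*))/2 (with respect to the decomposition induced by p) is a projection, i.e., q(x)² = q(x) and q(x)* = q(x). -/
open scoped ComplexOrder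

/-!
Put `T = x + x⋆` and `e = p - (1 - p)`. Since `x` lies in the corner `pA(1-p)`, `T` anticommutes
with the symmetry `e`, and `T² = xx⋆ + x⋆x` commutes with `p`. The positive element `w = 1 - T²`
agrees with `1 - xx⋆` on the corner of `p` and with `1 - x⋆x` on the corner of `1 - p`, so by
uniqueness of positive square roots the diagonal blocks of `2q - 1` are `√w p` and `-√w (1 - p)`,
that is `2q - 1 = √w e + T`. As `√w` commutes with `e` and `T`, `(√w e + T)² = w + T² = 1`, and a
self-adjoint square root `c` of `1` makes `(1 + c) / 2` a projection.
-/

lemma mul_add_mul_self_eq_one_of_anticommute {R : Type*} [Ring R] {r e t : R}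
    (hre : Commute r e) (hrt : Commute r t) (hee : e * e = 1) (het : e * t = -(t * e))
    (h : r * r + t * t = 1) : (r * e + t) * (r * e + t) = 1 :=
  calc (r * e + t) * (r * e + t) = r * (e * r) * e + r * (e * t) + t * r * e + t * t := by
        noncomm_ring
    _ = r * r * (e * e) + r * (e * t + t * e) + t * t := by
        rw [← hre.eq, hrt.symm.eq]; noncomm_ring
    _ = 1 := by rw [hee, het, neg_add_cancel, mul_zero, mul_one, add_zero, h]

lemma IsSelfAdjoint.isStarProjection_smul_one_add {𝕜 A : Type*} [RCLike 𝕜] [Ring A]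
    [StarRing A] [Algebra 𝕜 A] [StarModule 𝕜 A] {c : A} (hc : IsSelfAdjoint c)
    (hcc : c * c = 1) : IsStarProjection ((2⁻¹ : 𝕜) • (1 + c)) := by
  have hsq : (1 + c) * (1 + c) = (2 : 𝕜) • (1 + c) := by
    rw [two_smul]
    calc (1 + c) * (1 + c) = 1 + c + c + c * c := by noncomm_ring
      _ = 1 + c + (1 + c) := by rw [hcc]; abel
  refine ⟨?_, ?_⟩
  · rw [IsIdempotentElem, smul_mul_smul_comm, hsq, smul_smul]
    norm_num
  · exact IsSelfAdjoint.smul (by simp [IsSelfAdjoint] : IsSelfAdjoint (2⁻¹ : 𝕜))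
      ((IsSelfAdjoint.one A).add hc)

lemma IsIdempotentElem.mul_mul_self_of_commute {R : Type*} [Semigroup R] {p b : R}
    (hp : IsIdempotentElem p) (h : Commute p b) : p * b * p = b * p := by
  rw [h.eq, mul_assoc, hp.eq]

lemma IsIdempotentElem.sub_one_sub_mul_self {R : Type*} [Ring R] {p : R}
    (hp : IsIdempotentElem p) : (p - (1 - p)) * (p - (1 - p)) = 1 := by
  rw [sub_mul, mul_sub p, mul_sub (1 - p), hp.eq, hp.mul_one_sub_self, hp.one_sub.eq,
    hp.one_sub_mul_self]
  abel

/-- The paper's condition `x ∈ pA(1 - p)`. -/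
def IsOffDiagonal {R : Type*} [Ring R] (p x : R) : Prop := p * x * (1 - p) = x

namespace IsOffDiagonal

variable {R : Type*} [Ring R] [StarRing R] {p x : R}

lemma proj_mul (hp : IsStarProjection p) (hx : IsOffDiagonal p x) : p * x = x := by
  rw [← hx, ← mul_assoc, ← mul_assoc, hp.isIdempotentElem.eq]

lemma mul_proj (hp : IsStarProjection p) (hx : IsOffDiagonal p x) : x * p = 0 := by
  rw [← hx, mul_assoc, hp.one_sub_mul_self, mul_zero]

lemma star_mul_proj (hp : IsStarProjection p) (hx : IsOffDiagonal p x) :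
    star x * p = star x := by
  rw [← hp.isSelfAdjoint.star_eq, ← star_mul, hx.proj_mul hp]

lemma proj_mul_star (hp : IsStarProjection p) (hx : IsOffDiagonal p x) : p * star x = 0 := by
  rw [← hp.isSelfAdjoint.star_eq, ← star_mul, hx.mul_proj hp, star_zero]

lemma commute_mul_star_self (hp : IsStarProjection p) (hx : IsOffDiagonal p x) :
    Commute p (x * star x) := by
  rw [Commute, SemiconjBy, ← mul_assoc, mul_assoc x, hx.proj_mul hp, hx.star_mul_proj hp]

lemma commute_star_mul_self (hp : IsStarProjection p) (hx : IsOffDiagonal p x) :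
    Commute p (star x * x) := by
  rw [Commute, SemiconjBy, ← mul_assoc, mul_assoc _ x, hx.proj_mul_star hp, hx.mul_proj hp,
    zero_mul, mul_zero]

lemma add_star_mul_self (hp : IsStarProjection p) (hx : IsOffDiagonal p x) :
    (x + star x) * (x + star x) = x * star x + star x * x := by
  have hxx : x * x = 0 := by
    rw [← hx.proj_mul hp, mul_assoc, ← mul_assoc x, hx.mul_proj hp, zero_mul, mul_zero]
  rw [mul_add, add_mul, add_mul, hxx, ← star_mul, hxx, star_zero]
  abel

lemma reflection_mul_add_star (hp : IsStarProjection p) (hx : IsOffDiagonal p x) :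
    (p - (1 - p)) * (x + star x) = -((x + star x) * (p - (1 - p))) := by
  simp only [sub_mul, mul_sub, mul_add, add_mul, one_mul, mul_one, hx.proj_mul hp,
    hx.mul_proj hp, hx.star_mul_proj hp, hx.proj_mul_star hp]
  abel

lemma one_sub_sub_mul_proj (hp : IsStarProjection p) (hx : IsOffDiagonal p x) :
    (1 - x * star x - star x * x) * p = (1 - x * star x) * p := by
  rw [sub_mul _ (star x * x), mul_assoc (star x), hx.mul_proj hp, mul_zero, sub_zero]

lemma one_sub_sub_mul_one_sub_proj (hp : IsStarProjection p) (hx : IsOffDiagonal p x) :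
    (1 - x * star x - star x * x) * (1 - p) = (1 - star x * x) * (1 - p) := by
  simp only [sub_mul, mul_sub, one_mul, mul_one, mul_assoc, hx.mul_proj hp, hx.star_mul_proj hp]
  abel

lemma commute_one_sub_mul_star_self (hp : IsStarProjection p) (hx : IsOffDiagonal p x) :
    Commute p (1 - x * star x) :=
  (Commute.one_right p).sub_right (hx.commute_mul_star_self hp)

lemma commute_one_sub_star_mul_self (hp : IsStarProjection p) (hx : IsOffDiagonal p x) :
    Commute (1 - p) (1 - star x * x) :=
  (Commute.one_left _).sub_left ((Commute.one_right p).sub_right (hx.commute_star_mul_self hp))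

lemma commute_one_sub_sub (hp : IsStarProjection p) (hx : IsOffDiagonal p x) :
    Commute p (1 - x * star x - star x * x) :=
  (hx.commute_one_sub_mul_star_self hp).sub_right (hx.commute_star_mul_self hp)

end IsOffDiagonal

section CStarAlgebra

variable {A : Type*} [CStarAlgebra A] [PartialOrder A] [StarOrderedRing A]

protected lemma Commute.cfcSqrt_left {a b : A} (h : Commute a b) : Commute (CFC.sqrt a) b := by
  rw [CFC.sqrt_eq_cfc (a := a)]
  exact h.cfc_nnreal _

lemma IsStarProjection.cfcSqrt_mul_of_commute {p a : A} (hp : IsStarProjection p)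
    (hpa : Commute p a) (ha : 0 ≤ a) : CFC.sqrt a * p = CFC.sqrt (a * p) := by
  have hps : Commute p (CFC.sqrt a) := hpa.symm.cfcSqrt_left.symm
  refine (CFC.sqrt_unique (a := a * p) ?_ ?_).symm
  · calc CFC.sqrt a * p * (CFC.sqrt a * p) = CFC.sqrt a * (p * CFC.sqrt a) * p := by
          noncomm_ring
      _ = CFC.sqrt a * CFC.sqrt a * (p * p) := by rw [hps.eq]; noncomm_ring
      _ = a * p := by rw [CFC.sqrt_mul_sqrt_self a, hp.isIdempotentElem.eq]
  · rw [← hp.isIdempotentElem.mul_mul_self_of_commute hps]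
    exact hp.isSelfAdjoint.conjugate_nonneg (CFC.sqrt_nonneg a)

lemma IsStarProjection.mul_cfcSqrt_mul_self_of_mul_eq {p a b : A} (hp : IsStarProjection p)
    (hpa : Commute p a) (hpb : Commute p b) (ha : 0 ≤ a) (hb : 0 ≤ b) (hab : a * p = b * p) :
    p * CFC.sqrt a * p = CFC.sqrt b * p := by
  rw [hp.isIdempotentElem.mul_mul_self_of_commute hpa.symm.cfcSqrt_left.symm,
    hp.cfcSqrt_mul_of_commute hpa ha, hab, hp.cfcSqrt_mul_of_commute hpb hb]

lemma CStarAlgebra.one_sub_mul_star_self_nonneg {x : A} (hx : ‖x‖ ≤ 1) :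
    0 ≤ 1 - x * star x := by
  rw [sub_nonneg, ← CStarAlgebra.norm_le_one_iff_of_nonneg _ (mul_star_self_nonneg x),
    CStarRing.norm_self_mul_star]
  exact mul_le_one₀ hx (norm_nonneg x) hx

lemma CStarAlgebra.one_sub_star_mul_self_nonneg {x : A} (hx : ‖x‖ ≤ 1) :
    0 ≤ 1 - star x * x := by
  simpa using one_sub_mul_star_self_nonneg (A := A) (x := star x) (by rwa [norm_star])

namespace IsOffDiagonal

variable {p x : A}

lemma one_sub_sub_nonneg (hp : IsStarProjection p) (hx : IsOffDiagonal p x) (hxn : ‖x‖ ≤ 1) :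
    0 ≤ 1 - x * star x - star x * x := by
  have hsplit : 1 - x * star x - star x * x =
      p * (1 - x * star x) * p + (1 - p) * (1 - star x * x) * (1 - p) := by
    rw [hp.isIdempotentElem.mul_mul_self_of_commute (hx.commute_one_sub_mul_star_self hp),
      hp.one_sub.isIdempotentElem.mul_mul_self_of_commute (hx.commute_one_sub_star_mul_self hp),
      ← hx.one_sub_sub_mul_proj hp, ← hx.one_sub_sub_mul_one_sub_proj hp]
    noncomm_ring
  rw [hsplit]
  exact add_nonneg
    (hp.isSelfAdjoint.conjugate_nonneg (CStarAlgebra.one_sub_mul_star_self_nonneg hxn))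
    (hp.one_sub.isSelfAdjoint.conjugate_nonneg (CStarAlgebra.one_sub_star_mul_self_nonneg hxn))

lemma isStarProjection_smul_one_add_cfcSqrt (hp : IsStarProjection p) (hx : IsOffDiagonal p x)
    (hxn : ‖x‖ ≤ 1) :
    IsStarProjection ((2⁻¹ : ℂ) •
      (1 + (CFC.sqrt (1 - x * star x - star x * x) * (p - (1 - p)) + (x + star x)))) := by
  have hw := hx.one_sub_sub_nonneg hp hxn
  have hT : 1 - x * star x - star x * x = 1 - (x + star x) * (x + star x) := by
    rw [hx.add_star_mul_self hp, sub_sub]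
  have hrp := (hx.commute_one_sub_sub hp).symm.cfcSqrt_left
  have hre : Commute (CFC.sqrt (1 - x * star x - star x * x)) (p - (1 - p)) :=
    hrp.sub_right ((Commute.one_right _).sub_right hrp)
  have hrT : Commute (CFC.sqrt (1 - x * star x - star x * x)) (x + star x) := by
    rw [hT]
    exact ((Commute.one_left _).sub_left ((Commute.refl _).mul_left (Commute.refl _))).cfcSqrt_left
  have hrr : CFC.sqrt (1 - x * star x - star x * x) * CFC.sqrt (1 - x * star x - star x * x) +
      (x + star x) * (x + star x) = 1 := by
    rw [CFC.sqrt_mul_sqrt_self _ hw, hT, sub_add_cancel]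
  have hc : IsSelfAdjoint
      (CFC.sqrt (1 - x * star x - star x * x) * (p - (1 - p)) + (x + star x)) :=
    (((CFC.sqrt_nonneg _).isSelfAdjoint.commute_iff
      (hp.isSelfAdjoint.sub hp.one_sub.isSelfAdjoint)).1 hre).add (.add_star_self x)
  exact hc.isStarProjection_smul_one_add <| mul_add_mul_self_eq_one_of_anticommute hre hrT
    hp.isIdempotentElem.sub_one_sub_mul_self (hx.reflection_mul_add_star hp) hrr

end IsOffDiagonal

end CStarAlgebra

/-- In a unital C*-algebra, if `p` is a projection and `x ∈ pA(1−p)` is a contraction,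
then `q(x)` with block components `(1+√(1−xx*))/2`, `x/2`, `x*/2`, `(1−√(1−xx*))/2`
(with respect to the decomposition induced by `p`, the square roots being those of
continuous functional calculus in the respective corners) is a projection. -/
theorem stmt_11 {A : Type*} [CStarAlgebra A] [PartialOrder A] [StarOrderedRing A]
    (p x : A) (hp : p * p = p) (hps : star p = p)
    (hx : p * x * (1 - p) = x) (hxn : ‖x‖ ≤ 1) :
    (let q : A := (2⁻¹ : ℂ) •
        (p + p * CFC.sqrt (1 - x * star x) * p + x + star x +
          (1 - p) - (1 - p) * CFC.sqrt (1 - star x * x) * (1 - p));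
      q * q = q ∧ star q = q) := by
  have hP : IsStarProjection p := ⟨hp, hps⟩
  have hx : IsOffDiagonal p x := hx
  have hw := hx.one_sub_sub_nonneg hP hxn
  have hs : p * CFC.sqrt (1 - x * star x) * p = CFC.sqrt (1 - x * star x - star x * x) * p :=
    hP.mul_cfcSqrt_mul_self_of_mul_eq (hx.commute_one_sub_mul_star_self hP)
      (hx.commute_one_sub_sub hP) (CStarAlgebra.one_sub_mul_star_self_nonneg hxn) hw
      (hx.one_sub_sub_mul_proj hP).symm
  have ht : (1 - p) * CFC.sqrt (1 - star x * x) * (1 - p) =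
      CFC.sqrt (1 - x * star x - star x * x) * (1 - p) :=
    hP.one_sub.mul_cfcSqrt_mul_self_of_mul_eq (hx.commute_one_sub_star_mul_self hP)
      ((Commute.one_left _).sub_left (hx.commute_one_sub_sub hP))
      (CStarAlgebra.one_sub_star_mul_self_nonneg hxn) hw (hx.one_sub_sub_mul_one_sub_proj hP).symm
  have hq : p + p * CFC.sqrt (1 - x * star x) * p + x + star x +
      (1 - p) - (1 - p) * CFC.sqrt (1 - star x * x) * (1 - p) =
      1 + (CFC.sqrt (1 - x * star x - star x * x) * (p - (1 - p)) + (x + star x)) := by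
    rw [hs, ht]
    noncomm_ring
  have hproj := hx.isStarProjection_smul_one_add_cfcSqrt hP hxn
  rw [← hq] at hproj
  exact ⟨hproj.isIdempotentElem.eq, hproj.isSelfAdjoint.star_eq⟩
end

section
/- In M₂(C₀((0,M])⁺) (unitization), with t the identity function on (0,M], f = t^{1/2}, g = (1+t^{1/2})^{1/2}, the matrix [[1, t],[0, 1]] equals the multiplicative commutator of diag(g, g⁻¹) and [[1, f],[0, 1]]. -/
/-! Conjugating the unipotent `[[1, f], [0, 1]]` by `diag(g, g⁻¹)` scales its corner to
`g² f`, so the commutator is `[[1, (g² - 1) f], [0, 1]]`; with `g² = 1 + f` and `f² = t`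
the corner is `t`. -/

noncomputable section

open scoped ComplexOrder

/-- The algebra of continuous functions on `(0, M]` (the unitized picture is realized
by working with `C((0,M], ℂ)` itself, which contains constants). -/
abbrev Bdl (M : ℝ) := C(Set.Ioc (0 : ℝ) M, ℂ)

/-- `t`, the identity function on `(0, M]`. -/
def tfun (M : ℝ) : Bdl M := ⟨fun x => (x.1 : ℂ), by fun_prop⟩

/-- `f = t^{1/2}`. -/
def ffun (M : ℝ) : Bdl M := ⟨fun x => (Real.sqrt x.1 : ℂ), by fun_prop⟩

/-- `g = (1 + t^{1/2})^{1/2}`. -/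
def gfun (M : ℝ) : Bdl M := ⟨fun x => (Real.sqrt (1 + Real.sqrt x.1) : ℂ), by fun_prop⟩

/-- `g⁻¹ = (1 + t^{1/2})^{-1/2}`. -/
def ginvfun (M : ℝ) : Bdl M :=
  ⟨fun x => ((Real.sqrt (1 + Real.sqrt x.1) : ℂ))⁻¹, by
    have h : Continuous fun x : Set.Ioc (0 : ℝ) M => Real.sqrt (1 + Real.sqrt x.1) := by
      fun_prop
    exact (Complex.continuous_ofReal.comp h).inv₀ fun x => by
      have hx : (0 : ℝ) < x.1 := x.2.1
      have : (0 : ℝ) < Real.sqrt (1 + Real.sqrt x.1) := by positivity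
      simpa using Complex.ofReal_ne_zero.mpr (ne_of_gt this)⟩

namespace Matrix

variable {R : Type*} [CommRing R]

theorem diag_fin_two_mul_diag_fin_two {g g' : R} (h : g * g' = 1) :
    !![g, 0; 0, g'] * !![g', 0; 0, g] = 1 := by
  rw [mul_fin_two, one_fin_two, mul_comm g' g, h]
  simp

theorem unipotent_fin_two_mul_neg (f : R) :
    !![1, f; 0, 1] * !![1, -f; 0, 1] = 1 := by
  rw [mul_fin_two, one_fin_two]
  simp

theorem diag_unipotent_commutator_fin_two {g g' : R} (h : g * g' = 1) (f : R) :
    !![g, 0; 0, g'] * !![1, f; 0, 1] * !![g', 0; 0, g] * !![1, -f; 0, 1] =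
      !![1, (g * g - 1) * f; 0, 1] := by
  have h' : g' * g = 1 := by rw [mul_comm, h]
  have corner : -f + g * f * g = (g * g - 1) * f := by ring
  simp only [mul_fin_two, mul_zero, zero_mul, add_zero, zero_add, mul_one, one_mul, h, h',
    corner]

end Matrix

section

variable (M : ℝ)

theorem gfun_mul_ginvfun : gfun M * ginvfun M = 1 := by
  ext x
  have hpos : (0 : ℝ) < Real.sqrt (1 + Real.sqrt x.1) := by positivity
  simp only [ContinuousMap.mul_apply, ContinuousMap.one_apply, gfun, ginvfun,
    ContinuousMap.coe_mk]
  exact mul_inv_cancel₀ (Complex.ofReal_ne_zero.mpr hpos.ne')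

theorem gfun_mul_self : gfun M * gfun M = 1 + ffun M := by
  ext x
  have hx : (0 : ℝ) ≤ 1 + Real.sqrt x.1 := by positivity
  simp only [ContinuousMap.mul_apply, ContinuousMap.add_apply, ContinuousMap.one_apply,
    gfun, ffun, ContinuousMap.coe_mk]
  rw [← Complex.ofReal_mul, Real.mul_self_sqrt hx]
  push_cast
  rfl

theorem ffun_mul_self : ffun M * ffun M = tfun M := by
  ext x
  simp only [ContinuousMap.mul_apply, ffun, tfun, ContinuousMap.coe_mk]
  rw [← Complex.ofReal_mul, Real.mul_self_sqrt x.2.1.le]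

end

theorem stmt_13_general (M : ℝ)
    (G U : (Matrix (Fin 2) (Fin 2) (Bdl M))ˣ)
    (hG : (G : Matrix (Fin 2) (Fin 2) (Bdl M)) = !![gfun M, 0; 0, ginvfun M])
    (hU : (U : Matrix (Fin 2) (Fin 2) (Bdl M)) = !![1, ffun M; 0, 1]) :
    ((G * U * G⁻¹ * U⁻¹ : (Matrix (Fin 2) (Fin 2) (Bdl M))ˣ) :
        Matrix (Fin 2) (Fin 2) (Bdl M)) = !![1, tfun M; 0, 1] := by
  have hg := gfun_mul_ginvfun M
  have hGinv : ((G⁻¹ : (Matrix (Fin 2) (Fin 2) (Bdl M))ˣ) : Matrix (Fin 2) (Fin 2) (Bdl M)) =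
      !![ginvfun M, 0; 0, gfun M] :=
    Units.inv_eq_of_mul_eq_one_right (hG ▸ Matrix.diag_fin_two_mul_diag_fin_two hg)
  have hUinv : ((U⁻¹ : (Matrix (Fin 2) (Fin 2) (Bdl M))ˣ) : Matrix (Fin 2) (Fin 2) (Bdl M)) =
      !![1, -ffun M; 0, 1] :=
    Units.inv_eq_of_mul_eq_one_right (hU ▸ Matrix.unipotent_fin_two_mul_neg _)
  rw [Units.val_mul, Units.val_mul, Units.val_mul, hG, hU, hGinv, hUinv,
    Matrix.diag_unipotent_commutator_fin_two hg, gfun_mul_self, add_sub_cancel_left,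
    ffun_mul_self]

/-- In `M₂` over (the unitization of) `C₀((0, M])`, with `t` the identity function,
`f = t^{1/2}` and `g = (1 + t^{1/2})^{1/2}`, the matrix `[[1, t], [0, 1]]` is the
multiplicative commutator of `diag(g, g⁻¹)` and `[[1, f], [0, 1]]`. -/
theorem stmt_13 (M : ℝ) (hM : 0 < M)
    (G U : (Matrix (Fin 2) (Fin 2) (Bdl M))ˣ)
    (hG : (G : Matrix (Fin 2) (Fin 2) (Bdl M)) = !![gfun M, 0; 0, ginvfun M])
    (hU : (U : Matrix (Fin 2) (Fin 2) (Bdl M)) = !![1, ffun M; 0, 1]) :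
    ((G * U * G⁻¹ * U⁻¹ : (Matrix (Fin 2) (Fin 2) (Bdl M))ˣ) :
        Matrix (Fin 2) (Fin 2) (Bdl M)) = !![1, tfun M; 0, 1] :=
  stmt_13_general M G U hG hU

end
end

section
/- In M₂(R) over a commutative ring R, if g = 1 + h² for some h ∈ R and g is invertible with square root g^{1/2}, then diag(g, g⁻¹) is the multiplicative commutator of [[g^{1/2}, h],[0, g^{-1/2}]] and [[g^{-1/2}, 0],[h, g^{1/2}]]. -/
/-!
With `s = g^{1/2}` and `t = s⁻¹`, the two factors of the commutator multiply out using only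
`s t = 1`: `UV = [[g, hs], [ht, 1]]` and `U⁻¹V⁻¹ = [[g, -ht], [-hs, 1]]`. Their product is
`[[g² - h²s², h(s - gt)], [h(gt - s), 1 - h²t²]]`, and `s² = g = 1 + h²` collapses it to
`diag(g, t²)`.
-/

namespace Matrix

variable {R : Type*} [CommRing R]

theorem fin_two_upper_mul_upper_inv {s t : R} (b : R) (hst : s * t = 1) :
    !![s, b; 0, t] * !![t, -b; 0, s] = 1 := by
  rw [mul_fin_two, one_fin_two]
  congr 1; grind

theorem fin_two_lower_mul_lower_inv {s t : R} (c : R) (hst : s * t = 1) :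
    !![t, 0; c, s] * !![s, 0; -c, t] = 1 := by
  rw [mul_fin_two, one_fin_two]
  congr 1; grind

theorem fin_two_upper_mul_lower {s t : R} (h : R) (hst : s * t = 1) :
    !![s, h; 0, t] * !![t, 0; h, s] = !![1 + h ^ 2, h * s; h * t, 1] := by
  rw [mul_fin_two]
  congr 1; grind

theorem fin_two_upper_inv_mul_lower_inv {s t : R} (h : R) (hst : s * t = 1) :
    !![t, -h; 0, s] * !![s, 0; -h, t] = !![1 + h ^ 2, -(h * t); -(h * s), 1] := by
  rw [mul_fin_two]
  congr 1; grind

theorem fin_two_commutator_eq_diagonal {s t : R} (h : R) (hst : s * t = 1)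
    (hs : s * s = 1 + h ^ 2) :
    !![s, h; 0, t] * !![t, 0; h, s] * (!![t, -h; 0, s] * !![s, 0; -h, t]) =
      !![1 + h ^ 2, 0; 0, t * t] := by
  rw [fin_two_upper_mul_lower h hst, fin_two_upper_inv_mul_lower_inv h hst, mul_fin_two]
  congr 1; grind

end Matrix

open Matrix in
/-- In `M₂(R)` over a commutative ring `R`, if `g = 1 + h²` has an invertible square
root `r` (so `r² = g`), then `diag(g, g⁻¹)` is the multiplicative commutator of
`[[r, h],[0, r⁻¹]]` and `[[r⁻¹, 0],[h, r]]`. -/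
theorem stmt_14 {R : Type*} [CommRing R] (h : R) (r : Rˣ)
    (hg : (r : R) * (r : R) = 1 + h ^ 2)
    (U V : (Matrix (Fin 2) (Fin 2) R)ˣ)
    (hU : (U : Matrix (Fin 2) (Fin 2) R) = !![(r : R), h; 0, ((r⁻¹ : Rˣ) : R)])
    (hV : (V : Matrix (Fin 2) (Fin 2) R) = !![((r⁻¹ : Rˣ) : R), 0; h, (r : R)]) :
    ((U * V * U⁻¹ * V⁻¹ : (Matrix (Fin 2) (Fin 2) R)ˣ) : Matrix (Fin 2) (Fin 2) R) =
      !![(1 + h ^ 2 : R), 0; 0, ((r⁻¹ * r⁻¹ : Rˣ) : R)] := by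
  have hUinv : ((U⁻¹ : _) : Matrix (Fin 2) (Fin 2) R) = !![((r⁻¹ : Rˣ) : R), -h; 0, (r : R)] :=
    Units.inv_eq_of_mul_eq_one_right (hU ▸ fin_two_upper_mul_upper_inv h r.mul_inv)
  have hVinv : ((V⁻¹ : _) : Matrix (Fin 2) (Fin 2) R) = !![(r : R), 0; -h, ((r⁻¹ : Rˣ) : R)] :=
    Units.inv_eq_of_mul_eq_one_right (hV ▸ fin_two_lower_mul_lower_inv h r.mul_inv)
  simp only [Units.val_mul]
  rw [mul_assoc, hU, hV, hUinv, hVinv]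
  exact fin_two_commutator_eq_diagonal h r.mul_inv hg
end

section
/- Let A be a Banach algebra and let x, y ∈ A with ‖x‖ + ‖y‖ < log 2. Then log(e^x e^y) is defined (by the convergent Campbell–Baker–Hausdorff series / holomorphic functional calculus), and log(e^x e^y) − (x + y) belongs to the closed linear span of commutators [A, A]. -/
/-!
Let `S` be the closed span of the commutators. The quotient map `A → A ⧸ S` is a tracial
continuous linear map, so it suffices to show `φ (log (e^x e^y)) = φ x + φ y` for every tracial
`φ`. Along `w t = e^{tx} e^{ty} - 1` the trace property turns the derivative of
`φ (w t ^ (n + 1))` into `(n + 1) φ (w t ^ n w' t)`, so the logarithm series differentiates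
termwise to `φ ((1 + w t)⁻¹ w' t)`, the geometric series of the inverse. With
`w' t = e^{tx} (x + y) e^{ty}` this is `φ (x + y)` by conjugation invariance, and integrating
from `0` to `1` gives the claim.
-/

open NormedSpace

noncomputable def logOneAdd (𝕂 : Type*) {A : Type*} [Field 𝕂] [Ring A] [Module 𝕂 A]
    [TopologicalSpace A] (a : A) : A :=
  ∑' n : ℕ, ((-1 : 𝕂) ^ n / (n + 1)) • a ^ (n + 1)

def IsTracial {M β : Type*} [Mul M] (φ : M → β) : Prop :=
  ∀ a b, φ (a * b) = φ (b * a)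

theorem IsTracial.map_inverse_mul_mul_mul {M₀ β : Type*} [MonoidWithZero M₀] {φ : M₀ → β}
    (hφ : IsTracial φ) {u v : M₀} (hu : IsUnit u) (hv : IsUnit v) (c : M₀) :
    φ (Ring.inverse (u * v) * (u * c * v)) = φ c := by
  rw [Ring.inverse_mul (Or.inl hu), mul_assoc, mul_assoc, Ring.inverse_mul_cancel_left u _ hu, hφ,
    mul_assoc, Ring.mul_inverse_cancel v hv, mul_one]

theorem norm_pow_mul_le {A : Type*} [SeminormedRing A] (a b : A) (n : ℕ) :
    ‖a ^ n * b‖ ≤ ‖a‖ ^ n * ‖b‖ := by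
  induction n with
  | zero => simp
  | succ n ih =>
    rw [pow_succ', mul_assoc, pow_succ', mul_assoc]
    exact (norm_mul_le _ _).trans (by gcongr)

theorem norm_mul_sub_one_le {A : Type*} [SeminormedRing A] (a b : A) :
    ‖a * b - 1‖ ≤ (‖a - 1‖ + 1) * (‖b - 1‖ + 1) - 1 := by
  have hab : a * b - 1 = (a - 1) * (b - 1) + (a - 1) + (b - 1) := by noncomm_ring
  calc ‖a * b - 1‖ ≤ ‖a - 1‖ * ‖b - 1‖ + ‖a - 1‖ + ‖b - 1‖ := by
        rw [hab]
        exact norm_add₃_le.trans (by gcongr; exact norm_mul_le _ _)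
    _ = _ := by ring

open Topology in
theorem exists_one_lt_mul_lt {c L : ℝ} (h : c < L) : ∃ k : ℝ, 1 < k ∧ k * c < L := by
  have : ∀ᶠ k in 𝓝 (1 : ℝ), k * c < L :=
    (continuous_id.mul continuous_const).continuousAt.eventually_lt continuousAt_const
      (by simpa using h)
  exact (Filter.Eventually.and (self_mem_nhdsWithin (s := Set.Ioi 1))
    (this.filter_mono nhdsWithin_le_nhds)).exists

section ExpBounds

variable {A : Type*} [NormedRing A] [NormedAlgebra ℚ A] [CompleteSpace A]

theorem norm_exp_sub_one_le (a : A) : ‖exp a - 1‖ ≤ Real.exp ‖a‖ - 1 := by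
  have hA := (hasSum_nat_add_iff' 1).mpr (exp_series_hasSum_exp' (𝕂 := ℚ) a)
  have hR := (hasSum_nat_add_iff' 1).mpr (exp_series_hasSum_exp' (𝕂 := ℝ) ‖a‖)
  simp only [Finset.range_one, Finset.sum_singleton, Nat.factorial_zero, Nat.cast_one, inv_one,
    pow_zero, one_smul, mul_one, ← Real.exp_eq_exp_ℝ, smul_eq_mul] at hA hR
  rw [← hA.tsum_eq]
  refine tsum_of_norm_bounded hR fun n => ?_
  rw [norm_smul, norm_inv, ← Rat.norm_cast_real, Rat.cast_natCast, Real.norm_natCast]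
  exact mul_le_mul_of_nonneg_left (norm_pow_le' a n.succ_pos) (by positivity)

theorem norm_exp_mul_exp_sub_one_le (x y : A) :
    ‖exp x * exp y - 1‖ ≤ Real.exp (‖x‖ + ‖y‖) - 1 := by
  calc ‖exp x * exp y - 1‖ ≤ (‖exp x - 1‖ + 1) * (‖exp y - 1‖ + 1) - 1 := norm_mul_sub_one_le _ _
    _ ≤ Real.exp ‖x‖ * Real.exp ‖y‖ - 1 := by
        gcongr
        · linarith [norm_exp_sub_one_le x]
        · linarith [norm_exp_sub_one_le y]
    _ = _ := by rw [Real.exp_add]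

end ExpBounds

section Tracial

variable {𝕂 A F : Type*} [RCLike 𝕂] [NormedRing A] [NormedAlgebra 𝕂 A]
  [NormedAddCommGroup F] [NormedSpace 𝕂 F]

theorem summable_logOneAdd_series [CompleteSpace A] {a : A} (ha : ‖a‖ < 1) :
    Summable fun n : ℕ => ((-1 : 𝕂) ^ n / (n + 1)) • a ^ (n + 1) := by
  refine .of_norm_bounded ((summable_geometric_of_lt_one (norm_nonneg a) ha).mul_left ‖a‖)
    fun n => ?_
  have hc : ‖((-1 : 𝕂) ^ n / (n + 1))‖ ≤ 1 := by
    rw [norm_div, norm_pow, norm_neg, norm_one, one_pow, ← Nat.cast_succ, RCLike.norm_natCast]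
    exact div_le_one_of_le₀ (by simp) (by positivity)
  calc ‖((-1 : 𝕂) ^ n / (n + 1)) • a ^ (n + 1)‖
      = ‖((-1 : 𝕂) ^ n / (n + 1))‖ * ‖a ^ (n + 1)‖ := norm_smul _ _
    _ ≤ 1 * ‖a‖ ^ (n + 1) := by gcongr; exact norm_pow_le' a n.succ_pos
    _ = ‖a‖ * ‖a‖ ^ n := by ring

theorem IsTracial.hasDerivAt_pow_succ {φ : A →L[𝕂] F} (hφ : IsTracial φ) {w : 𝕂 → A} {w' : A}
    {t : 𝕂} (hw : HasDerivAt w w' t) (n : ℕ) :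
    HasDerivAt (fun s => φ (w s ^ (n + 1))) ((n + 1 : 𝕂) • φ (w t ^ n * w')) t := by
  have hterm :
      ∀ i ∈ Finset.range (n + 1), φ (w t ^ (n - i) * w' * w t ^ i) = φ (w t ^ n * w') := by
    intro i hi
    rw [hφ, ← mul_assoc, ← pow_add, Nat.add_sub_cancel' (Finset.mem_range_succ_iff.mp hi)]
  have h := φ.hasFDerivAt.comp_hasDerivAt t (hw.fun_pow' (n + 1))
  rwa [Nat.pred_succ, map_sum, Finset.sum_congr rfl hterm, Finset.sum_const, Finset.card_range,
    ← Nat.cast_smul_eq_nsmul 𝕂, Nat.cast_succ] at h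

variable [CompleteSpace A] [CompleteSpace F]

theorem IsTracial.hasDerivAt_logOneAdd {φ : A →L[𝕂] F} (hφ : IsTracial φ) {s : Set 𝕂}
    (hs : IsOpen s) (hs' : IsPreconnected s) {w w' : 𝕂 → A} (hw : ∀ t ∈ s, HasDerivAt w (w' t) t)
    {r M : ℝ} (hr : r < 1) (hwr : ∀ t ∈ s, ‖w t‖ ≤ r) (hw' : ∀ t ∈ s, ‖w' t‖ ≤ M) {t : 𝕂}
    (ht : t ∈ s) :
    HasDerivAt (fun t => φ (logOneAdd 𝕂 (w t))) (φ (Ring.inverse (1 + w t) * w' t)) t := by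
  have hr0 : 0 ≤ r := (norm_nonneg _).trans (hwr t ht)
  have hlt : ∀ t ∈ s, ‖w t‖ < 1 := fun t ht => (hwr t ht).trans_lt hr
  have hgeom : Summable fun n => (-w t) ^ n :=
    summable_geometric_of_norm_lt_one (by simpa using hlt t ht)
  set c : ℕ → 𝕂 := fun n => (-1) ^ n / (n + 1)
  have hsum : ∀ t ∈ s, φ (logOneAdd 𝕂 (w t)) = ∑' n, c n • φ (w t ^ (n + 1)) := by
    intro t ht
    simp_rw [← map_smul]
    exact φ.map_tsum (summable_logOneAdd_series (hlt t ht))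
  have hderiv : ∀ n, ∀ t ∈ s,
      HasDerivAt (fun t => c n • φ (w t ^ (n + 1))) (φ ((-w t) ^ n * w' t)) t := by
    intro n t ht
    refine ((hφ.hasDerivAt_pow_succ (hw t ht) n).const_smul (c n)).congr_deriv ?_
    rw [smul_smul, div_mul_cancel₀ _ (by exact_mod_cast n.succ_ne_zero), ← map_smul,
      ← smul_mul_assoc, ← smul_pow, neg_one_smul]
  have hbound : ∀ n, ∀ t ∈ s, ‖φ ((-w t) ^ n * w' t)‖ ≤ ‖φ‖ * M * r ^ n := by
    intro n t ht
    rw [mul_assoc]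
    refine φ.le_opNorm_of_le ((norm_pow_mul_le _ _ n).trans ?_)
    rw [norm_neg, mul_comm]
    gcongr
    exacts [(norm_nonneg _).trans (hw' t ht), hw' t ht, hwr t ht]
  have hinv : Ring.inverse (1 + w t) = ∑' n, (-w t) ^ n := by
    rw [← sub_neg_eq_add, NormedRing.inverse_one_sub _ (by simpa using hlt t ht)]
    rfl
  rw [hinv, ← hgeom.tsum_mul_right, φ.map_tsum (hgeom.mul_right _)]
  refine (hasDerivAt_tsum_of_isPreconnected
    ((summable_geometric_of_lt_one hr0 hr).mul_left _) hs hs' hderiv hbound ht ?_ ht)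
    |>.congr_of_eventuallyEq (Filter.eventually_of_mem (hs.mem_nhds ht) hsum)
  simp_rw [← map_smul]
  exact φ.summable (summable_logOneAdd_series (hlt t ht))

open Metric in
theorem IsTracial.map_logOneAdd_exp_mul_exp {φ : A →L[𝕂] F} (hφ : IsTracial φ) {x y : A}
    (h : ‖x‖ + ‖y‖ < Real.log 2) :
    φ (logOneAdd 𝕂 (exp x * exp y - 1)) = φ x + φ y := by
  let _ : NormedAlgebra ℚ A := .restrictScalars ℚ 𝕂 A
  -- `k > 1` gives an open disc around `[0, 1]` on which `‖w t‖` stays uniformly below `1`.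
  obtain ⟨k, hk1, hk⟩ := exists_one_lt_mul_lt h
  set w : 𝕂 → A := fun t => exp (t • x) * exp (t • y) - 1
  set w' : 𝕂 → A := fun t => exp (t • x) * (x + y) * exp (t • y)
  have hw : ∀ t, HasDerivAt w (w' t) t := fun t =>
    ((hasDerivAt_exp_smul_const x t).mul (hasDerivAt_exp_smul_const' y t)).sub_const 1
      |>.congr_deriv (by simp only [w']; noncomm_ring)
  have hwr : ∀ t ∈ ball (0 : 𝕂) k, ‖w t‖ ≤ Real.exp (k * (‖x‖ + ‖y‖)) - 1 := by
    intro t ht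
    refine (norm_exp_mul_exp_sub_one_le _ _).trans ?_
    rw [mem_ball_zero_iff] at ht
    rw [norm_smul, norm_smul, ← mul_add]
    gcongr
  have hr : Real.exp (k * (‖x‖ + ‖y‖)) - 1 < 1 := by
    linarith [(Real.exp_lt_exp.mpr hk).trans_eq (Real.exp_log two_pos)]
  obtain ⟨M, hM⟩ := (isCompact_closedBall (0 : 𝕂) k).exists_bound_of_continuousOn
    (f := w') (by fun_prop)
  have hderiv : ∀ t ∈ ball (0 : 𝕂) k,
      HasDerivAt (fun t => φ (logOneAdd 𝕂 (w t))) (φ (x + y)) t := by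
    intro t ht
    refine (hφ.hasDerivAt_logOneAdd isOpen_ball (convex_ball 0 k).isPreconnected
      (fun t _ => hw t) hr hwr (fun t ht => hM t (ball_subset_closedBall ht)) ht).congr_deriv ?_
    simp only [w, w', add_sub_cancel]
    exact hφ.map_inverse_mul_mul_mul (isUnit_exp _) (isUnit_exp _) _
  have h0 : (0 : 𝕂) ∈ ball (0 : 𝕂) k := mem_ball_self (by linarith)
  have h1 : (1 : 𝕂) ∈ ball (0 : 𝕂) k := by simpa using hk1
  have := isOpen_ball.eqOn_of_deriv_eq (convex_ball (0 : 𝕂) k).isPreconnected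
    (fun t ht => (hderiv t ht).differentiableAt.differentiableWithinAt)
    ((differentiable_id.smul_const (φ (x + y))).differentiableOn)
    (fun t ht => by
      rw [(hderiv t ht).deriv]
      exact (((hasDerivAt_id t).smul_const _).deriv.trans (one_smul _ _)).symm)
    h0 (by simp [w, logOneAdd]) h1
  simpa [w] using this

end Tracial

/-- In a complex Banach algebra, if `‖x‖ + ‖y‖ < log 2` then
`log(e^x e^y) − (x + y)` lies in the closed linear span of commutators `[A, A]`,
where `log(e^x e^y)` is given by the convergent series
`∑ (−1)ⁿ/(n+1) (e^x e^y − 1)^{n+1}`. -/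
theorem stmt_18 {A : Type*} [NormedRing A] [NormedAlgebra ℂ A] [CompleteSpace A]
    (x y : A) (h : ‖x‖ + ‖y‖ < Real.log 2) :
    (∑' n : ℕ, (((-1 : ℂ) ^ n / (n + 1)) • (exp x * exp y - 1) ^ (n + 1))) - (x + y)
      ∈ closure (Submodule.span ℂ {z : A | ∃ c d : A, z = c * d - d * c} : Set A) := by
  set S := (Submodule.span ℂ {z : A | ∃ c d : A, z = c * d - d * c}).topologicalClosure
  -- makes `A ⧸ S` a normed space
  have : IsClosed (S : Set A) := Submodule.isClosed_topologicalClosure _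
  have hφ : IsTracial S.mkQL := by
    intro a b
    rw [← sub_eq_zero, ← map_sub, Submodule.mkQL_apply, Submodule.mkQ_apply,
      Submodule.Quotient.mk_eq_zero]
    exact Submodule.le_topologicalClosure _ (Submodule.subset_span ⟨a, b, rfl⟩)
  rw [← Submodule.topologicalClosure_coe, SetLike.mem_coe, ← Submodule.Quotient.mk_eq_zero,
    ← Submodule.mkQ_apply, ← Submodule.mkQL_apply, map_sub, map_add, sub_eq_zero]
  exact hφ.map_logOneAdd_exp_mul_exp h
end
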